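/- arXiv:1306.2093 — 2 statements merged into one kernel-verified Lean document; each statement's English description precedes it below -/
import Mathlib

section
/- (Subadditivity of the total mixed p-mean modulus over partitions into cubes.) Let 0 < p < ∞ and r ∈ ℕ^d. If a cube 𝕀 ⊂ ℝ^d is the union 𝕀 = ⋃_{j=1}^n 𝕀_j of cubes 𝕀_j with pairwise disjoint interiors, then there is a constant C depending only on r, d and p such that for every f ∈ L_p(𝕀) and every t ∈ ℝ₊^d: ∑_{j=1}^n W_r(f,t)_{p,𝕀_j}^p ≤ C · W_r(f,t)_{p,𝕀}^p. -/
open MeasureTheory ENNReal NNReal Finset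

/-- The mixed `r`-th difference operator `Δ_h^r` applied to `f` at `x`. -/
noncomputable def mixedDiff {d : ℕ} (r : Fin d → ℕ) (h : Fin d → ℝ)
    (f : (Fin d → ℝ) → ℝ) (x : Fin d → ℝ) : ℝ :=
  ∑ j : (i : Fin d) → Fin (r i + 1),
    (∏ i, (-1 : ℝ) ^ (r i - (j i : ℕ)) * ((r i).choose (j i) : ℝ)) *
      f (fun i => x i + (j i : ℝ) * h i)

/-- The `d`-parallelepiped `Q = ∏ [a_i, b_i]`. -/
def box {d : ℕ} (a b : Fin d → ℝ) : Set (Fin d → ℝ) :=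
  Set.univ.pi fun i => Set.Icc (a i) (b i)

/-- `Q_y = {x ∈ Q : x_i, x_i + y_i ∈ [a_i,b_i] ∀ i}`. -/
def boxShift {d : ℕ} (a b : Fin d → ℝ) (y : Fin d → ℝ) : Set (Fin d → ℝ) :=
  {x | ∀ i, x i ∈ Set.Icc (a i) (b i) ∧ x i + y i ∈ Set.Icc (a i) (b i)}

/-- The `L_p` quasi-norm of `f` on a set `S` (essential supremum for `p = ∞`). -/
noncomputable def pNorm {d : ℕ} (p : ℝ≥0∞) (f : (Fin d → ℝ) → ℝ)
    (S : Set (Fin d → ℝ)) : ℝ≥0∞ :=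
  eLpNorm f p (volume.restrict S)

/-- The mixed `r`-th modulus of smoothness `ω_r(f,t)_{p,Q}`. -/
noncomputable def modulus {d : ℕ} (p : ℝ≥0∞) (r : Fin d → ℕ) (f : (Fin d → ℝ) → ℝ)
    (a b : Fin d → ℝ) (t : Fin d → ℝ) : ℝ≥0∞ :=
  ⨆ h ∈ {h : Fin d → ℝ | ∀ i, |h i| ≤ t i},
    pNorm p (mixedDiff r h f) (boxShift a b fun i => (r i : ℝ) * h i)

/-- `r(e)` : the vector with coordinates `r_i` on `e` and `0` off `e`. -/
def restrictOrder {d : ℕ} (r : Fin d → ℕ) (e : Finset (Fin d)) : Fin d → ℕ :=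
  fun i => if i ∈ e then r i else 0

/-- The total mixed modulus of smoothness `Ω_r(f,t)_{p,Q}`. -/
noncomputable def totalModulus {d : ℕ} (p : ℝ≥0∞) (r : Fin d → ℕ) (f : (Fin d → ℝ) → ℝ)
    (a b : Fin d → ℝ) (t : Fin d → ℝ) : ℝ≥0∞ :=
  ∑ e ∈ Finset.univ.powerset.erase ∅, modulus p (restrictOrder r e) f a b t

/-- `φ ∈ 𝒫_r` : `φ` is a polynomial of degree at most `r_i - 1` in the variable `x_i`. -/
def IsPolyDeg {d : ℕ} (r : Fin d → ℕ) (φ : (Fin d → ℝ) → ℝ) : Prop :=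
  ∃ P : MvPolynomial (Fin d) ℝ, (∀ i, P.degreeOf i < r i) ∧ ∀ x, φ x = MvPolynomial.eval x P

/-- The error `E_r(f)_{p,Q}` of best approximation by polynomials from `𝒫_r`. -/
noncomputable def bestApprox {d : ℕ} (p : ℝ≥0∞) (r : Fin d → ℕ) (f : (Fin d → ℝ) → ℝ)
    (a b : Fin d → ℝ) : ℝ≥0∞ :=
  ⨅ φ ∈ {φ : (Fin d → ℝ) → ℝ | IsPolyDeg r φ}, pNorm p (fun x => f x - φ x) (box a b)

/-- The mixed `p`-mean modulus of smoothness `w_r(f,t)_{p,Q}`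
(the outer mean integral is replaced by a supremum when `p = ∞`). -/
noncomputable def meanModulus {d : ℕ} (p : ℝ≥0∞) (r : Fin d → ℕ) (f : (Fin d → ℝ) → ℝ)
    (a b : Fin d → ℝ) (t : Fin d → ℝ) : ℝ≥0∞ :=
  if p = ∞ then modulus p r f a b t
  else
    ((∏ i, (ENNReal.ofReal (t i))⁻¹) *
        ∫⁻ h in {h : Fin d → ℝ | ∀ i, |h i| ≤ t i},
          ∫⁻ x in boxShift a b (fun i => (r i : ℝ) * h i),
            (‖mixedDiff r h f x‖₊ : ℝ≥0∞) ^ p.toReal) ^ (1 / p.toReal)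

/-- The total mixed `p`-mean modulus of smoothness `W_r(f,t)_{p,Q}`. -/
noncomputable def totalMeanModulus {d : ℕ} (p : ℝ≥0∞) (r : Fin d → ℕ) (f : (Fin d → ℝ) → ℝ)
    (a b : Fin d → ℝ) (t : Fin d → ℝ) : ℝ≥0∞ :=
  ∑ e ∈ Finset.univ.powerset.erase ∅, meanModulus p (restrictOrder r e) f a b t

/-- The cube with lower-left corner `c` and side length `s`. -/
def cube {d : ℕ} (c : Fin d → ℝ) (s : ℝ) : Set (Fin d → ℝ) :=
  box c (fun i => c i + s)

/-!
For each nonempty `e ⊆ [d]`, the `p`-th power of `w_{r(e)}(f,t)_{p,Q}` is a mean over `h` of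
`∫_{Q_{r(e)h}} |Δ_h^{r(e)} f|^p`. If the cubes `𝕀_j` have pairwise disjoint interiors, the sets
`(𝕀_j)_{r(e)h}` are a.e.-disjoint subsets of `𝕀_{r(e)h}`, so these `p`-th powers are
superadditive over the partition. Comparing the `ℓ¹` and `ℓ^p` norms of the `2^d - 1` summands
of `W_r` turns this into the claim, with `C` depending only on `d` and `p`.
-/

open scoped Function

theorem ENNReal.rpow_sum_le_card_rpow_mul_sum_rpow {κ : Type*} (E : Finset κ) (a : κ → ℝ≥0∞)
    {q : ℝ} (hq : 0 < q) : (∑ e ∈ E, a e) ^ q ≤ (#E : ℝ≥0∞) ^ q * ∑ e ∈ E, a e ^ q := by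
  rcases E.eq_empty_or_nonempty with rfl | hE
  · simp [ENNReal.zero_rpow_of_pos hq]
  obtain ⟨e₀, he₀, hsup⟩ := E.exists_mem_eq_sup hE a
  calc (∑ e ∈ E, a e) ^ q ≤ (#E * E.sup a) ^ q := by
        gcongr
        simpa only [nsmul_eq_mul] using E.sum_le_card_nsmul a _ fun e he => le_sup he
    _ = (#E : ℝ≥0∞) ^ q * a e₀ ^ q := by rw [ENNReal.mul_rpow_of_nonneg _ _ hq.le, hsup]
    _ ≤ (#E : ℝ≥0∞) ^ q * ∑ e ∈ E, a e ^ q := by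
        gcongr
        exact single_le_sum (f := fun e => a e ^ q) (fun _ _ => zero_le) he₀

theorem ENNReal.sum_rpow_le_card_mul_rpow_sum {κ : Type*} (E : Finset κ) (a : κ → ℝ≥0∞)
    {q : ℝ} (hq : 0 ≤ q) : ∑ e ∈ E, a e ^ q ≤ #E * (∑ e ∈ E, a e) ^ q := by
  simpa only [nsmul_eq_mul] using E.sum_le_card_nsmul _ _ fun e he =>
    ENNReal.rpow_le_rpow (single_le_sum (fun _ _ => zero_le) he) hq

theorem ENNReal.sum_rpow_sum_le {ι κ : Type*} [Fintype ι] (E : Finset κ) (a : κ → ι → ℝ≥0∞)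
    (A : κ → ℝ≥0∞) {q : ℝ} (hq : 0 < q) (h : ∀ e ∈ E, ∑ j, a e j ^ q ≤ A e ^ q) :
    ∑ j, (∑ e ∈ E, a e j) ^ q ≤ (#E : ℝ≥0∞) ^ q * #E * (∑ e ∈ E, A e) ^ q :=
  calc ∑ j, (∑ e ∈ E, a e j) ^ q ≤ ∑ j, (#E : ℝ≥0∞) ^ q * ∑ e ∈ E, a e j ^ q :=
        sum_le_sum fun j _ => rpow_sum_le_card_rpow_mul_sum_rpow E _ hq
    _ = (#E : ℝ≥0∞) ^ q * ∑ e ∈ E, ∑ j, a e j ^ q := by rw [← mul_sum, sum_comm]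
    _ ≤ (#E : ℝ≥0∞) ^ q * ∑ e ∈ E, A e ^ q := by gcongr with e he; exact h e he
    _ ≤ (#E : ℝ≥0∞) ^ q * #E * (∑ e ∈ E, A e) ^ q := by
        rw [mul_assoc]; gcongr; exact sum_rpow_le_card_mul_rpow_sum E A hq.le

theorem MeasureTheory.sum_lintegral_le_lintegral_sum {α ι : Type*} [MeasurableSpace α]
    (μ : Measure α) (s : Finset ι) (F : ι → α → ℝ≥0∞) :
    ∑ j ∈ s, ∫⁻ x, F j x ∂μ ≤ ∫⁻ x, ∑ j ∈ s, F j x ∂μ := by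
  classical
  induction s using Finset.induction_on with
  | empty => simp
  | insert j s hj ih =>
    simp only [sum_insert hj]
    exact (add_le_add_right ih _).trans (le_lintegral_add _ _)

theorem MeasureTheory.sum_setLIntegral_le_of_aedisjoint {α ι : Type*} [MeasurableSpace α]
    [Fintype ι] {μ : Measure α} {S : ι → Set α} {T : Set α}
    (hS : ∀ j, NullMeasurableSet (S j) μ) (hd : Pairwise (AEDisjoint μ on S))
    (hST : ∀ j, S j ⊆ T) (g : α → ℝ≥0∞) :
    ∑ j, ∫⁻ x in S j, g x ∂μ ≤ ∫⁻ x in T, g x ∂μ := by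
  rw [← tsum_fintype (L := .unconditional ι), ← lintegral_iUnion₀ hS hd]
  exact lintegral_mono_set (Set.iUnion_subset hST)

theorem Convex.aedisjoint_of_disjoint_interior {E : Type*} [NormedAddCommGroup E]
    [NormedSpace ℝ E] [MeasurableSpace E] [BorelSpace E] [FiniteDimensional ℝ E]
    (μ : Measure E) [μ.IsAddHaarMeasure] {s t : Set E} (hs : Convex ℝ s) (ht : Convex ℝ t)
    (h : Disjoint (interior s) (interior t)) : AEDisjoint μ s t := by
  have hsub : s ∩ t ⊆ frontier s ∪ frontier t := by
    rintro x ⟨hxs, hxt⟩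
    by_cases hx : x ∈ interior s
    · exact Or.inr ⟨subset_closure hxt, Set.disjoint_left.1 h hx⟩
    · exact Or.inl ⟨subset_closure hxs, hx⟩
  exact measure_mono_null hsub <|
    measure_union_null (hs.addHaar_frontier μ) (ht.addHaar_frontier μ)

section Box

variable {d : ℕ}

theorem convex_box (a b : Fin d → ℝ) : Convex ℝ (_root_.box a b) :=
  convex_pi fun _ _ => convex_Icc _ _

theorem measurableSet_box (a b : Fin d → ℝ) : MeasurableSet (_root_.box a b) :=
  MeasurableSet.univ_pi fun _ => measurableSet_Icc

theorem boxShift_eq (a b y : Fin d → ℝ) :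
    boxShift a b y = _root_.box a b ∩ (· + y) ⁻¹' _root_.box a b := by
  ext x
  simp only [boxShift, _root_.box, Set.mem_ofPred_eq, Set.mem_inter_iff, Set.mem_preimage,
    Set.mem_univ_pi, Pi.add_apply, forall_and]

theorem measurableSet_boxShift (a b y : Fin d → ℝ) : MeasurableSet (boxShift a b y) := by
  rw [boxShift_eq]
  exact (measurableSet_box a b).inter (measurable_add_const y (measurableSet_box a b))

theorem boxShift_subset_box (a b y : Fin d → ℝ) : boxShift a b y ⊆ _root_.box a b := by
  rw [boxShift_eq]
  exact Set.inter_subset_left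

theorem boxShift_mono {a b a' b' : Fin d → ℝ} (h : _root_.box a b ⊆ _root_.box a' b')
    (y : Fin d → ℝ) :
    boxShift a b y ⊆ boxShift a' b' y := by
  rw [boxShift_eq, boxShift_eq]
  exact Set.inter_subset_inter h (Set.preimage_mono h)

end Box

theorem meanModulus_rpow_toReal {d : ℕ} {p : ℝ≥0∞} (hp : p ≠ 0) (hp' : p ≠ ∞)
    (r : Fin d → ℕ) (f : (Fin d → ℝ) → ℝ) (a b t : Fin d → ℝ) :
    meanModulus p r f a b t ^ p.toReal =
      (∏ i, (ENNReal.ofReal (t i))⁻¹) *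
        ∫⁻ h in {h : Fin d → ℝ | ∀ i, |h i| ≤ t i},
          ∫⁻ x in boxShift a b (fun i => (r i : ℝ) * h i),
            (‖mixedDiff r h f x‖₊ : ℝ≥0∞) ^ p.toReal := by
  rw [meanModulus, if_neg hp', ← ENNReal.rpow_mul,
    one_div_mul_cancel (ENNReal.toReal_pos hp hp').ne', ENNReal.rpow_one]

theorem sum_meanModulus_rpow_le {ι : Type*} [Fintype ι] {d : ℕ} {p : ℝ≥0∞} (hp : p ≠ 0)
    (hp' : p ≠ ∞) (r : Fin d → ℕ) (f : (Fin d → ℝ) → ℝ) (t : Fin d → ℝ)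
    {a b : Fin d → ℝ} {A B : ι → Fin d → ℝ}
    (hsub : ∀ j, _root_.box (A j) (B j) ⊆ _root_.box a b)
    (hd : Pairwise (AEDisjoint volume on fun j => _root_.box (A j) (B j))) :
    ∑ j, meanModulus p r f (A j) (B j) t ^ p.toReal ≤ meanModulus p r f a b t ^ p.toReal := by
  simp only [meanModulus_rpow_toReal hp hp', ← mul_sum]
  gcongr
  refine (sum_lintegral_le_lintegral_sum _ _ _).trans (lintegral_mono fun h => ?_)
  exact sum_setLIntegral_le_of_aedisjoint
    (fun j => (measurableSet_boxShift _ _ _).nullMeasurableSet)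
    (fun j j' hjj' => (hd hjj').mono (boxShift_subset_box _ _ _) (boxShift_subset_box _ _ _))
    (fun j => boxShift_mono (hsub j) _) _

theorem totalMeanModulus_subadditive_general (d : ℕ) (p : ℝ≥0∞) (hp : 0 < p) (hp' : p ≠ ∞)
    (r : Fin d → ℕ) :
    ∃ C : ℝ≥0, 0 < C ∧
      ∀ (n : ℕ) (c : Fin n → Fin d → ℝ) (s : Fin n → ℝ) (c₀ : Fin d → ℝ) (s₀ : ℝ),
        (∀ j, 0 ≤ s j) → 0 ≤ s₀ →
        (⋃ j, cube (c j) (s j)) = cube c₀ s₀ →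
        (Pairwise fun j j' =>
          Disjoint (interior (cube (c j) (s j))) (interior (cube (c j') (s j')))) →
        ∀ f : (Fin d → ℝ) → ℝ, MemLp f p (volume.restrict (cube c₀ s₀)) →
          ∀ t : Fin d → ℝ, (∀ i, 0 ≤ t i) →
            ∑ j, (totalMeanModulus p r f (c j) (fun i => c j i + s j) t) ^ p.toReal ≤
              C * (totalMeanModulus p r f c₀ (fun i => c₀ i + s₀) t) ^ p.toReal := by
  set E : Finset (Finset (Fin d)) := univ.powerset.erase ∅
  -- the `+ 1` keeps `C` positive when `d = 0`, where `E` is empty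
  refine ⟨(#E : ℝ≥0) ^ p.toReal * #E + 1, by positivity, ?_⟩
  intro n c s c₀ s₀ _ _ hunion hdisj f _ t _
  have hsub : ∀ j, cube (c j) (s j) ⊆ cube c₀ s₀ := fun j =>
    hunion ▸ Set.subset_iUnion (fun j => cube (c j) (s j)) j
  have hd : Pairwise (AEDisjoint volume on fun j => cube (c j) (s j)) := fun j j' hjj' =>
    (convex_box _ _).aedisjoint_of_disjoint_interior volume (convex_box _ _) (hdisj hjj')
  calc ∑ j, totalMeanModulus p r f (c j) (fun i => c j i + s j) t ^ p.toReal
      ≤ (#E : ℝ≥0∞) ^ p.toReal * #E *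
          totalMeanModulus p r f c₀ (fun i => c₀ i + s₀) t ^ p.toReal :=
        ENNReal.sum_rpow_sum_le E _ _ (ENNReal.toReal_pos hp.ne' hp') fun _ _ =>
          sum_meanModulus_rpow_le hp.ne' hp' _ f t hsub hd
    _ ≤ _ := by
        gcongr
        rw [ENNReal.coe_add, ENNReal.coe_mul, ENNReal.coe_rpow_of_nonneg _ toReal_nonneg]
        exact le_self_add

/-- **Subadditivity of the total mixed `p`-mean modulus over partitions into cubes.**
If the cube `𝕀` is the union of cubes `𝕀_j`, `j = 1,…,n`, with pairwise disjoint interiors,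
then `∑_j W_r(f,t)_{p,𝕀_j}^p ≤ C · W_r(f,t)_{p,𝕀}^p` with `C = C(r,d,p)`. -/
theorem totalMeanModulus_subadditive (d : ℕ) (p : ℝ≥0∞) (hp : 0 < p) (hp' : p ≠ ∞)
    (r : Fin d → ℕ) (hr : ∀ i, 1 ≤ r i) :
    ∃ C : ℝ≥0, 0 < C ∧
      ∀ (n : ℕ) (c : Fin n → Fin d → ℝ) (s : Fin n → ℝ) (c₀ : Fin d → ℝ) (s₀ : ℝ),
        (∀ j, 0 ≤ s j) → 0 ≤ s₀ →
        (⋃ j, cube (c j) (s j)) = cube c₀ s₀ →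
        (Pairwise fun j j' =>
          Disjoint (interior (cube (c j) (s j))) (interior (cube (c j') (s j')))) →
        ∀ f : (Fin d → ℝ) → ℝ, MemLp f p (volume.restrict (cube c₀ s₀)) →
          ∀ t : Fin d → ℝ, (∀ i, 0 ≤ t i) →
            ∑ j, (totalMeanModulus p r f (c j) (fun i => c j i + s j) t) ^ p.toReal ≤
              C * (totalMeanModulus p r f c₀ (fun i => c₀ i + s₀) t) ^ p.toReal :=
  totalMeanModulus_subadditive_general d p hp hp' r
end

section
/- (Difference representation formula.) Let r ∈ ℕ^d and let a_k (0 < k ≤ r) and b_e (∅ ≠ e ⊂ [d]) be the coefficients of the polynomial identity 1 = ∑_{0<k≤r} a_k x^k + ∑_{∅≠e⊂[d]} b_e ∏_{i∈e}(x_i−1)^{r_i}. Then for every function f : ℝ^d → ℝ and all x, h ∈ ℝ^d: f(x) = ∑_{0 < k ≤ r} a_k f(x + kh) + ∑_{∅ ≠ e ⊂ [d]} b_e Δ_h^{r(e)}(f,x), where kh = (k₁h₁,…,k_d h_d). In particular, if f ∈ L_p^loc(ℝ^d) satisfies Δ_h^{r(e)}(f,x) = 0 for all nonempty e ⊂ [d]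 and almost all (x,h), then f(x) = ∑_{0 < k ≤ r} a_k f(x + kh) for almost all (x,h) ∈ ℝ^d × ℝ^d. -/
/-!
Expanding `∏_{i∈e} (x_i - 1)^{r_i}` binomially, both sides of the polynomial identity are
combinations of the monomials `x^m`, `0 ≤ m ≤ r`; comparing coefficients, the identity says that the
coefficient `c_m` of `x^m` on its right-hand side is `1` for `m = 0` and `0` otherwise.
Replacing each monomial `x^m` by `f(x + mh)` turns `∏_{i∈e} (x_i - 1)^{r_i}` into `Δ_h^{r(e)}(f, x)`,
so the right-hand side of the difference formula is `∑_m c_m f(x + mh) = f(x)`. The almost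
everywhere statement follows by dropping the finitely many differences that vanish a.e.
-/

open MeasureTheory ENNReal NNReal Finset

/-- `f ∈ L_p^loc(ℝ^d)` : every point has a neighborhood on which `f` is `L_p`. -/
def MemLpLoc {d : ℕ} (p : ℝ≥0∞) (f : (Fin d → ℝ) → ℝ) : Prop :=
  ∀ x : Fin d → ℝ, ∃ V ∈ nhds x, MemLp f p (volume.restrict V)

section MultiIndex

variable {d : ℕ} {r : Fin d → ℕ}

theorem eq_zero_of_forall_sum_mul_prod_pow_eq_zero {R : Type*} [CommRing R] [IsDomain R]
    [Infinite R] (c : ((i : Fin d) → Fin (r i + 1)) → R)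
    (hc : ∀ x : Fin d → R, ∑ m, c m * ∏ i, x i ^ (m i : ℕ) = 0) : c = 0 := by
  let exponent : ((i : Fin d) → Fin (r i + 1)) → Fin d →₀ ℕ :=
    fun m => Finsupp.equivFunOnFinite.symm fun i => (m i : ℕ)
  have exponent_injective : Function.Injective exponent := fun m m' hmm' =>
    funext fun i => Fin.ext (DFunLike.congr_fun hmm' i)
  let P : MvPolynomial (Fin d) R := ∑ m, MvPolynomial.monomial (exponent m) (c m)
  have hP : P = 0 := MvPolynomial.funext fun x => by
    simpa [P, MvPolynomial.eval_monomial, Finsupp.prod_fintype, exponent] using hc x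
  funext m
  have hcoeff : P.coeff (exponent m) = c m := by
    simp only [P, MvPolynomial.coeff_sum, MvPolynomial.coeff_monomial,
      exponent_injective.eq_iff, Finset.sum_ite_eq', Finset.mem_univ, if_true]
  simpa [hP] using hcoeff.symm

theorem sum_mul_eq_apply_zero {R : Type*} [CommRing R] [IsDomain R] [Infinite R]
    {c : ((i : Fin d) → Fin (r i + 1)) → R}
    (hc : ∀ x : Fin d → R, ∑ m, c m * ∏ i, x i ^ (m i : ℕ) = 1)
    (F : ((i : Fin d) → Fin (r i + 1)) → R) :
    ∑ m, c m * F m = F 0 := by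
  have hc0 : c = Pi.single 0 1 := by
    rw [← sub_eq_zero]
    refine eq_zero_of_forall_sum_mul_prod_pow_eq_zero _ fun x => ?_
    simp [sub_mul, Finset.sum_sub_distrib, hc x, Pi.single_apply]
  simp [hc0, Pi.single_apply]

def mixedDiffCoeff (s m : Fin d → ℕ) : ℝ :=
  ∏ i, (-1 : ℝ) ^ (s i - m i) * ((s i).choose (m i) : ℝ)

theorem prod_sub_one_pow_eq_sum (s : Fin d → ℕ) (x : Fin d → ℝ) :
    ∏ i, (x i - 1) ^ s i =
      ∑ j : (i : Fin d) → Fin (s i + 1),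
        mixedDiffCoeff s (fun i => j i) * ∏ i, x i ^ (j i : ℕ) := by
  have binomial : ∀ (n : ℕ) (y : ℝ), (y - 1) ^ n =
      ∑ j : Fin (n + 1), (-1 : ℝ) ^ (n - (j : ℕ)) * (n.choose j : ℝ) * y ^ (j : ℕ) := by
    intro n y
    rw [Fin.sum_univ_eq_sum_range (fun j => (-1 : ℝ) ^ (n - j) * (n.choose j : ℝ) * y ^ j),
      sub_eq_add_neg, add_pow]
    exact Finset.sum_congr rfl fun j _ => by ring
  simp_rw [binomial, Finset.prod_univ_sum, mixedDiffCoeff, ← Finset.prod_mul_distrib]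
  rfl

theorem sum_mixedDiffCoeff_mul_eq_of_le {s : Fin d → ℕ} (hsr : ∀ i, s i ≤ r i)
    (G : (Fin d → ℕ) → ℝ) :
    ∑ j : (i : Fin d) → Fin (s i + 1), mixedDiffCoeff s (fun i => j i) * G (fun i => j i) =
      ∑ m : (i : Fin d) → Fin (r i + 1), mixedDiffCoeff s (fun i => m i) * G (fun i => m i) := by
  refine Finset.sum_of_injOn (fun j i => Fin.castLE (Nat.succ_le_succ (hsr i)) (j i))
    (fun j _ j' _ hjj' => funext fun i => Fin.ext (congrArg (fun m => (m i : ℕ)) hjj'))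
    (fun _ _ => Finset.mem_coe.2 (Finset.mem_univ _)) (fun m _ hm => ?_) (fun _ _ => rfl)
  -- outside the smaller box some binomial coefficient `(s i).choose (m i)` vanishes
  obtain ⟨i, hi⟩ : ∃ i, s i < m i := by
    by_contra! hle
    exact hm ⟨fun i => ⟨m i, Nat.lt_succ_of_le (hle i)⟩, Finset.mem_coe.2 (Finset.mem_univ _),
      rfl⟩
  simp [mixedDiffCoeff, Finset.prod_eq_zero (Finset.mem_univ i), Nat.choose_eq_zero_of_lt hi]

theorem mixedDiff_eq_sum_of_le {s : Fin d → ℕ} (hsr : ∀ i, s i ≤ r i) (h : Fin d → ℝ)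
    (f : (Fin d → ℝ) → ℝ) (x : Fin d → ℝ) :
    mixedDiff s h f x =
      ∑ m : (i : Fin d) → Fin (r i + 1),
        mixedDiffCoeff s (fun i => m i) * f (fun i => x i + (m i : ℝ) * h i) :=
  sum_mixedDiffCoeff_mul_eq_of_le hsr fun m => f fun i => x i + (m i : ℝ) * h i

theorem prod_sub_one_pow_eq_sum_of_le {s : Fin d → ℕ} (hsr : ∀ i, s i ≤ r i) (x : Fin d → ℝ) :
    ∏ i, (x i - 1) ^ s i =
      ∑ m : (i : Fin d) → Fin (r i + 1),
        mixedDiffCoeff s (fun i => m i) * ∏ i, x i ^ (m i : ℕ) := by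
  rw [prod_sub_one_pow_eq_sum]
  exact sum_mixedDiffCoeff_mul_eq_of_le hsr fun m => ∏ i, x i ^ m i

theorem restrictOrder_le (r : Fin d → ℕ) (e : Finset (Fin d)) (i : Fin d) :
    restrictOrder r e i ≤ r i := by
  unfold restrictOrder
  split_ifs <;> simp

theorem prod_sub_one_pow_restrictOrder (r : Fin d → ℕ) (e : Finset (Fin d)) (x : Fin d → ℝ) :
    ∏ i ∈ e, (x i - 1) ^ r i = ∏ i, (x i - 1) ^ restrictOrder r e i := by
  simp [restrictOrder, pow_ite, Finset.prod_ite_mem]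

end MultiIndex

theorem diff_representation_general (d : ℕ) (r : Fin d → ℕ)
    (a : ((i : Fin d) → Fin (r i + 1)) → ℝ) (b : Finset (Fin d) → ℝ)
    (hid : ∀ x : Fin d → ℝ,
      (1 : ℝ) =
        (∑ k ∈ Finset.univ.filter (fun k : (i : Fin d) → Fin (r i + 1) => ∃ i, (k i : ℕ) ≠ 0),
          a k * ∏ i, x i ^ (k i : ℕ)) +
        ∑ e ∈ Finset.univ.powerset.erase (∅ : Finset (Fin d)),
          b e * ∏ i ∈ e, (x i - 1) ^ (r i)) :
    (∀ (f : (Fin d → ℝ) → ℝ) (x h : Fin d → ℝ),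
      f x =
        (∑ k ∈ Finset.univ.filter (fun k : (i : Fin d) → Fin (r i + 1) => ∃ i, (k i : ℕ) ≠ 0),
          a k * f (fun i => x i + (k i : ℝ) * h i)) +
        ∑ e ∈ Finset.univ.powerset.erase (∅ : Finset (Fin d)),
          b e * mixedDiff (restrictOrder r e) h f x) ∧
    ∀ (p : ℝ≥0∞), 0 < p → ∀ f : (Fin d → ℝ) → ℝ, MemLpLoc p f →
      (∀ e ∈ Finset.univ.powerset.erase (∅ : Finset (Fin d)),
        ∀ᵐ xh : (Fin d → ℝ) × (Fin d → ℝ) ∂volume,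
          mixedDiff (restrictOrder r e) xh.2 f xh.1 = 0) →
      ∀ᵐ xh : (Fin d → ℝ) × (Fin d → ℝ) ∂volume,
        f xh.1 =
          ∑ k ∈ Finset.univ.filter (fun k : (i : Fin d) → Fin (r i + 1) => ∃ i, (k i : ℕ) ≠ 0),
            a k * f (fun i => xh.1 i + (k i : ℝ) * xh.2 i) := by
  let E := Finset.univ.powerset.erase (∅ : Finset (Fin d))
  let c : ((i : Fin d) → Fin (r i + 1)) → ℝ := fun m =>
    (if ∃ i, (m i : ℕ) ≠ 0 then a m else 0) +
      ∑ e ∈ E, b e * mixedDiffCoeff (restrictOrder r e) (fun i => m i)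
  have collect : ∀ G : ((i : Fin d) → Fin (r i + 1)) → ℝ,
      (∑ k ∈ Finset.univ.filter (fun k : (i : Fin d) → Fin (r i + 1) => ∃ i, (k i : ℕ) ≠ 0),
          a k * G k) +
        ∑ e ∈ E, b e * ∑ m, mixedDiffCoeff (restrictOrder r e) (fun i => m i) * G m =
      ∑ m, c m * G m := by
    intro G
    simp only [c, add_mul, Finset.sum_add_distrib, Finset.sum_filter, ite_mul,
      zero_mul, Finset.mul_sum, Finset.sum_mul, mul_assoc]
    rw [Finset.sum_comm (s := E)]
  have hc : ∀ G : ((i : Fin d) → Fin (r i + 1)) → ℝ, ∑ m, c m * G m = G 0 :=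
    sum_mul_eq_apply_zero fun x => by
      rw [← collect]
      simp only [← prod_sub_one_pow_eq_sum_of_le (restrictOrder_le r _),
        ← prod_sub_one_pow_restrictOrder]
      exact (hid x).symm
  have representation : ∀ (f : (Fin d → ℝ) → ℝ) (x h : Fin d → ℝ), f x =
      (∑ k ∈ Finset.univ.filter (fun k : (i : Fin d) → Fin (r i + 1) => ∃ i, (k i : ℕ) ≠ 0),
          a k * f (fun i => x i + (k i : ℝ) * h i)) +
        ∑ e ∈ E, b e * mixedDiff (restrictOrder r e) h f x := by
    intro f x h
    simp only [mixedDiff_eq_sum_of_le (restrictOrder_le r _), collect, hc]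
    simp
  refine ⟨representation, fun p _ f _ hdiff => ?_⟩
  filter_upwards [(Filter.eventually_all_finset E).2 hdiff] with xh hxh
  rw [representation f xh.1 xh.2,
    Finset.sum_eq_zero (s := E) fun e he => by rw [hxh e he, mul_zero], add_zero]

/-- **Difference representation formula.** If `a_k` (`0 < k ≤ r`) and `b_e` (`∅ ≠ e ⊂ [d]`)
are coefficients of the identity `1 = ∑_{0<k≤r} a_k x^k + ∑_{∅≠e⊂[d]} b_e ∏_{i∈e}(x_i−1)^{r_i}`,
then every `f : ℝ^d → ℝ` satisfies
`f(x) = ∑_{0<k≤r} a_k f(x + kh) + ∑_{∅≠e⊂[d]} b_e Δ_h^{r(e)}(f,x)` for all `x, h`;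
in particular, if `f ∈ L_p^loc(ℝ^d)` has `Δ_h^{r(e)}(f,x) = 0` for all nonempty `e` and almost
all `(x,h)`, then `f(x) = ∑_{0<k≤r} a_k f(x+kh)` for almost all `(x,h)`. -/
theorem diff_representation (d : ℕ) (r : Fin d → ℕ) (hr : ∀ i, 1 ≤ r i)
    (a : ((i : Fin d) → Fin (r i + 1)) → ℝ) (b : Finset (Fin d) → ℝ)
    (hid : ∀ x : Fin d → ℝ,
      (1 : ℝ) =
        (∑ k ∈ Finset.univ.filter (fun k : (i : Fin d) → Fin (r i + 1) => ∃ i, (k i : ℕ) ≠ 0),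
          a k * ∏ i, x i ^ (k i : ℕ)) +
        ∑ e ∈ Finset.univ.powerset.erase (∅ : Finset (Fin d)),
          b e * ∏ i ∈ e, (x i - 1) ^ (r i)) :
    (∀ (f : (Fin d → ℝ) → ℝ) (x h : Fin d → ℝ),
      f x =
        (∑ k ∈ Finset.univ.filter (fun k : (i : Fin d) → Fin (r i + 1) => ∃ i, (k i : ℕ) ≠ 0),
          a k * f (fun i => x i + (k i : ℝ) * h i)) +
        ∑ e ∈ Finset.univ.powerset.erase (∅ : Finset (Fin d)),
          b e * mixedDiff (restrictOrder r e) h f x) ∧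
    ∀ (p : ℝ≥0∞), 0 < p → ∀ f : (Fin d → ℝ) → ℝ, MemLpLoc p f →
      (∀ e ∈ Finset.univ.powerset.erase (∅ : Finset (Fin d)),
        ∀ᵐ xh : (Fin d → ℝ) × (Fin d → ℝ) ∂volume,
          mixedDiff (restrictOrder r e) xh.2 f xh.1 = 0) →
      ∀ᵐ xh : (Fin d → ℝ) × (Fin d → ℝ) ∂volume,
        f xh.1 =
          ∑ k ∈ Finset.univ.filter (fun k : (i : Fin d) → Fin (r i + 1) => ∃ i, (k i : ℕ) ≠ 0),
            a k * f (fun i => xh.1 i + (k i : ℝ) * xh.2 i) :=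
  diff_representation_general d r a b hid
end
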